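/- arXiv:1708.07801 — 2 statements merged into one kernel-verified Lean document; each statement's English description precedes it below -/
import Mathlib

section
/- Suppose log g has L_g-Lipschitz gradient and the log-transition density x' ↦ log m_{t+1}(x_{t+1}|x') is uniformly L_τ-Lipschitz. If γ ≤ 1/L_g and ‖∇log g(x_t)‖₂ ≥ 2L_τ, then with β(x_t) = x_t + γ∇log g(x_t) we have g(β(x_t))/g(x_t) ≥ sup_{x_{t+1}} m_{t+1}(x_{t+1}|x_t)/m_{t+1}(x_{t+1}|β(x_t)). In other words, the gain in likelihood from the gradient step dominates the worst-case loss in the transition density. -/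
/-! The gradient step `β(x) = x + γ ∇log g(x)` with `γ ≤ 1/L_g` raises `log g` by at least
`(γ/2)‖∇log g(x)‖²` (the descent lemma for an `L_g`-smooth function), while it moves the point by
`γ‖∇log g(x)‖`, so the `L_τ`-Lipschitz `log m` drops by at most `L_τ γ‖∇log g(x)‖`. Once
`‖∇log g(x)‖ ≥ 2L_τ` the gain dominates the loss; exponentiating gives the ratio inequality. -/

open InnerProductSpace

section Descent

variable {E : Type*} [NormedAddCommGroup E] [InnerProductSpace ℝ E] [CompleteSpace E]

lemma hasDerivAt_comp_add_smul {f : E → ℝ} {x v : E} {t : ℝ}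
    (hf : DifferentiableAt ℝ f (x + t • v)) :
    HasDerivAt (fun s : ℝ => f (x + s • v)) ⟪gradient f (x + t • v), v⟫_ℝ t := by
  have hline : HasDerivAt (fun s : ℝ => x + s • v) v t := by
    simpa using ((hasDerivAt_id t).smul_const v).const_add x
  have := hf.hasGradientAt.hasFDerivAt.comp_hasDerivAt t hline
  rwa [toDual_apply_apply] at this

/-- Descent lemma for a function with `L`-Lipschitz gradient. -/
lemma add_inner_gradient_sub_le_of_lipschitz_gradient {f : E → ℝ} (hf : Differentiable ℝ f)
    {L : ℝ} (hL : ∀ x y, ‖gradient f x - gradient f y‖ ≤ L * ‖x - y‖) (x v : E) :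
    f x + ⟪gradient f x, v⟫_ℝ - L / 2 * ‖v‖ ^ 2 ≤ f (x + v) := by
  set ψ : ℝ → ℝ := fun t => f (x + t • v) - t * ⟪gradient f x, v⟫_ℝ + L / 2 * ‖v‖ ^ 2 * t ^ 2
  have hψ : ∀ t, HasDerivAt ψ
      (⟪gradient f (x + t • v), v⟫_ℝ - ⟪gradient f x, v⟫_ℝ + L * ‖v‖ ^ 2 * t) t := by
    intro t
    refine (((hasDerivAt_comp_add_smul (hf _)).sub
      ((hasDerivAt_id t).mul_const ⟪gradient f x, v⟫_ℝ)).add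
      ((hasDerivAt_pow 2 t).const_mul (L / 2 * ‖v‖ ^ 2))).congr_deriv ?_
    ring
  have hψ_nonneg : ∀ t ∈ interior (Set.Ici (0 : ℝ)),
      0 ≤ ⟪gradient f (x + t • v), v⟫_ℝ - ⟪gradient f x, v⟫_ℝ + L * ‖v‖ ^ 2 * t := by
    intro t ht
    rw [interior_Ici, Set.mem_Ioi] at ht
    have : ⟪gradient f x - gradient f (x + t • v), v⟫_ℝ ≤ L * ‖v‖ ^ 2 * t :=
      calc ⟪gradient f x - gradient f (x + t • v), v⟫_ℝ
          ≤ ‖gradient f x - gradient f (x + t • v)‖ * ‖v‖ := real_inner_le_norm _ _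
        _ ≤ L * ‖x - (x + t • v)‖ * ‖v‖ := by gcongr; exact hL _ _
        _ = L * ‖v‖ ^ 2 * t := by
          rw [sub_add_cancel_left, norm_neg, norm_smul, Real.norm_of_nonneg ht.le]
          ring
    rw [inner_sub_left] at this
    linarith
  have hmono : MonotoneOn ψ (Set.Ici 0) :=
    monotoneOn_of_hasDerivWithinAt_nonneg (convex_Ici 0)
      (fun t _ => (hψ t).continuousAt.continuousWithinAt)
      (fun t _ => (hψ t).hasDerivWithinAt) hψ_nonneg
  have h01 : ψ 0 ≤ ψ 1 := hmono Set.self_mem_Ici (Set.mem_Ici.mpr zero_le_one) zero_le_one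
  simp only [ψ, zero_smul, add_zero, one_smul] at h01
  linarith

/-- A gradient-ascent step of size `γ ≤ 1/L` gains at least `(γ/2)‖∇f x‖²`. -/
lemma add_half_mul_norm_gradient_sq_le {f : E → ℝ} (hf : Differentiable ℝ f)
    {L : ℝ} (hL : ∀ x y, ‖gradient f x - gradient f y‖ ≤ L * ‖x - y‖)
    {γ : ℝ} (hγ0 : 0 < γ) (hγ : γ ≤ 1 / L) (x : E) :
    f x + γ / 2 * ‖gradient f x‖ ^ 2 ≤ f (x + γ • gradient f x) := by
  have hL0 : 0 < L := one_div_pos.mp (hγ0.trans_le hγ)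
  have hγL : γ * L ≤ 1 := (le_div_iff₀ hL0).mp (by simpa using hγ)
  have hdesc := add_inner_gradient_sub_le_of_lipschitz_gradient hf hL x (γ • gradient f x)
  rw [real_inner_smul_right, real_inner_self_eq_norm_sq, norm_smul,
    Real.norm_of_nonneg hγ0.le] at hdesc
  nlinarith [mul_le_mul_of_nonneg_right hγL (mul_nonneg hγ0.le (sq_nonneg ‖gradient f x‖))]

end Descent

lemma div_le_div_of_log_sub_le {a b c d : ℝ} (ha : 0 < a) (hb : 0 < b) (hc : 0 < c) (hd : 0 < d)
    (h : Real.log a - Real.log b ≤ Real.log c - Real.log d) : a / b ≤ c / d := by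
  rwa [← Real.log_le_log_iff (by positivity) (by positivity), Real.log_div ha.ne' hb.ne',
    Real.log_div hc.ne' hd.ne']

/-- Lemma 3 of the paper: when the gradient of `log g` is large enough
(`‖∇ log g(x_t)‖ ≥ 2L_τ`) and `γ ≤ 1/L_g`, the likelihood gain from the gradient step
dominates the worst-case loss in the transition density. -/
theorem stmt_9 (d : ℕ)
    (g : EuclideanSpace ℝ (Fin d) → ℝ) (hgpos : ∀ x, 0 < g x)
    (hdiff : Differentiable ℝ fun x => Real.log (g x))
    (Lg : ℝ)
    (hLip : ∀ x x', ‖gradient (fun y => Real.log (g y)) x -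
        gradient (fun y => Real.log (g y)) x'‖ ≤ Lg * ‖x - x'‖)
    (m : EuclideanSpace ℝ (Fin d) → EuclideanSpace ℝ (Fin d) → ℝ)
    (hmpos : ∀ x x', 0 < m x x')
    (Lτ : ℝ)
    (hmLip : ∀ x x' x'', |Real.log (m x x') - Real.log (m x x'')| ≤ Lτ * ‖x' - x''‖)
    (γ : ℝ) (hγ0 : 0 < γ) (hγ : γ ≤ 1 / Lg)
    (xt : EuclideanSpace ℝ (Fin d))
    (hgrad : 2 * Lτ ≤ ‖gradient (fun y => Real.log (g y)) xt‖) :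
    ∀ xnext : EuclideanSpace ℝ (Fin d),
      m xnext xt / m xnext (xt + γ • gradient (fun y => Real.log (g y)) xt)
        ≤ g (xt + γ • gradient (fun y => Real.log (g y)) xt) / g xt := by
  intro xnext
  set G := gradient (fun y => Real.log (g y)) xt
  have gain := add_half_mul_norm_gradient_sq_le hdiff hLip hγ0 hγ xt
  have loss : Real.log (m xnext xt) - Real.log (m xnext (xt + γ • G)) ≤ Lτ * (γ * ‖G‖) := by
    simpa [norm_smul, Real.norm_of_nonneg hγ0.le] using (abs_le.mp (hmLip xnext xt (xt + γ • G))).2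
  have loss_le_gain : Lτ * (γ * ‖G‖) ≤ γ / 2 * ‖G‖ ^ 2 := by
    nlinarith [mul_le_mul_of_nonneg_right hgrad (mul_nonneg hγ0.le (norm_nonneg G))]
  exact div_le_div_of_log_sub_le (hmpos _ _) (hmpos _ _) (hgpos _) (hgpos _) (by linarith)
end

section
/- Under the assumptions of the previous lemma (γ_t ≤ 1/L_t^g for t = 1,…,T), for the nudging operator α_t(x) = (x + γ_t∇log g_t(x))·1_{S_t}(x) + x·1_{S_t^c}(x) with S_t = {x : ‖∇log g_t(x)‖₂ ≥ 2L_t^τ}, the model evidence of the nudged model dominates that of the original model: ∫⋯∫ g_T(α_T(x_T)) ∏_{t=1}^{T−1} m_{t+1}(x_{t+1}|α_t(x_t)) g_t(α_t(x_t)) · m_1(x_1|x_0) m_0(x_0) dx_0⋯dx_T ≥ ∫⋯∫ g_T(x_T) ∏_{t=1}^{T−1} m_{t+1}(x_{t+1}|x_t) g_t(x_t) · m_1(x_1|x_0) m_0(x_0) dx_0⋯dx_T. -/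
/-!
On the set where it acts, the nudge is a gradient-ascent step of step size `γ ≤ 1/L` on `log g`,
so by the descent lemma it raises `log g` by at least `γ‖∇ log g‖² / 2`, which is at least
`L^τ` times the length `γ‖∇ log g‖` of the step because `‖∇ log g‖ ≥ 2L^τ`. Moving the
conditioning argument of the next transition density by that length lowers its logarithm by at
most `L^τ` times the same amount. Hence every factor `g_t · m_{t+1}` of the integrand, and the
last likelihood `g_T`, can only grow under the nudge, and the evidence inequality holds pointwise
before integrating.
-/

open MeasureTheory Finset InnerProductSpace
open Fin.NatCast

section GradientStep

variable {E : Type*} [NormedAddCommGroup E] [InnerProductSpace ℝ E] [CompleteSpace E]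
  {f : E → ℝ}

theorem Differentiable.hasDerivAt_apply_add_smul (hf : Differentiable ℝ f) (x v : E) (s : ℝ) :
    HasDerivAt (fun s : ℝ => f (x + s • v)) ⟪gradient f (x + s • v), v⟫_ℝ s := by
  have hline : HasDerivAt (fun s : ℝ => x + s • v) v s := by
    simpa using ((hasDerivAt_id s).smul_const v).const_add x
  exact (hf _).hasGradientAt.hasFDerivAt.comp_hasDerivAt s hline

theorem Differentiable.le_apply_add_of_lipschitz_gradient (hf : Differentiable ℝ f) {L : ℝ}
    (hlip : ∀ p q, ‖gradient f p - gradient f q‖ ≤ L * ‖p - q‖) (x v : E) :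
    f x + ⟪gradient f x, v⟫_ℝ - L / 2 * ‖v‖ ^ 2 ≤ f (x + v) := by
  set φ : ℝ → ℝ := fun s => f (x + s • v) - s * ⟪gradient f x, v⟫_ℝ + L / 2 * s ^ 2 * ‖v‖ ^ 2
  set φ' : ℝ → ℝ := fun s => ⟪gradient f (x + s • v) - gradient f x, v⟫_ℝ + L * s * ‖v‖ ^ 2
  have hφ : ∀ s, HasDerivAt φ (φ' s) s := by
    intro s
    have := ((hf.hasDerivAt_apply_add_smul x v s).sub
      ((hasDerivAt_id s).mul_const ⟪gradient f x, v⟫_ℝ)).add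
      (((hasDerivAt_pow 2 s).const_mul (L / 2)).mul_const (‖v‖ ^ 2))
    refine this.congr_deriv ?_
    simp only [φ', inner_sub_left]
    push_cast
    ring
  have hφ'_nonneg : ∀ s ∈ Set.Ioo (0 : ℝ) 1, 0 ≤ φ' s := by
    intro s hs
    have hbound : |⟪gradient f (x + s • v) - gradient f x, v⟫_ℝ| ≤ L * s * ‖v‖ ^ 2 :=
      calc _ ≤ ‖gradient f (x + s • v) - gradient f x‖ * ‖v‖ := abs_real_inner_le_norm _ _
        _ ≤ L * ‖s • v‖ * ‖v‖ := by
          gcongr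
          simpa using hlip (x + s • v) x
        _ = L * s * ‖v‖ ^ 2 := by
          rw [norm_smul, Real.norm_of_nonneg hs.1.le]
          ring
    linarith [neg_abs_le ⟪gradient f (x + s • v) - gradient f x, v⟫_ℝ]
  have hmono : MonotoneOn φ (Set.Icc 0 1) :=
    monotoneOn_of_hasDerivWithinAt_nonneg (convex_Icc 0 1)
      (fun s _ => (hφ s).continuousAt.continuousWithinAt) (fun s _ => (hφ s).hasDerivWithinAt)
      (by rwa [interior_Icc])
  have h01 := hmono (by simp) (by simp) zero_le_one
  have hφ0 : φ 0 = f x := by simp [φ]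
  have hφ1 : φ 1 = f (x + v) - ⟪gradient f x, v⟫_ℝ + L / 2 * ‖v‖ ^ 2 := by simp [φ]
  linarith

theorem Differentiable.le_apply_add_smul_gradient (hf : Differentiable ℝ f) {L γ : ℝ}
    (hlip : ∀ p q, ‖gradient f p - gradient f q‖ ≤ L * ‖p - q‖) (hγ : 0 ≤ γ) (hγL : γ * L ≤ 1)
    (x : E) :
    f x + γ / 2 * ‖gradient f x‖ ^ 2 ≤ f (x + γ • gradient f x) := by
  have h := hf.le_apply_add_of_lipschitz_gradient hlip x (γ • gradient f x)
  rw [real_inner_smul_right, real_inner_self_eq_norm_sq, norm_smul, Real.norm_of_nonneg hγ] at h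
  nlinarith [mul_nonneg (mul_nonneg hγ (sq_nonneg ‖gradient f x‖)) (sub_nonneg.2 hγL)]

end GradientStep

section Nudge

variable {E : Type*} [NormedAddCommGroup E] [InnerProductSpace ℝ E] [CompleteSpace E]

/-- The paper's `α_t`, with `f = log g_t` and threshold `κ = L_t^τ`. -/
noncomputable def nudge (f : E → ℝ) (κ γ : ℝ) (x : E) : E :=
  if 2 * κ ≤ ‖gradient f x‖ then x + γ • gradient f x else x

variable {f : E → ℝ} {L κ γ : ℝ}

theorem Differentiable.le_apply_nudge (hf : Differentiable ℝ f)
    (hlip : ∀ p q, ‖gradient f p - gradient f q‖ ≤ L * ‖p - q‖) (hγ : 0 ≤ γ) (hγL : γ * L ≤ 1)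
    (x : E) :
    f x ≤ f (nudge f κ γ x) := by
  unfold nudge
  split_ifs
  · have := hf.le_apply_add_smul_gradient hlip hγ hγL x
    nlinarith [mul_nonneg hγ (sq_nonneg ‖gradient f x‖)]
  · exact le_rfl

theorem Differentiable.mul_norm_nudge_sub_le (hf : Differentiable ℝ f)
    (hlip : ∀ p q, ‖gradient f p - gradient f q‖ ≤ L * ‖p - q‖) (hγ : 0 ≤ γ) (hγL : γ * L ≤ 1)
    (x : E) :
    κ * ‖nudge f κ γ x - x‖ ≤ f (nudge f κ γ x) - f x := by
  unfold nudge
  split_ifs with hκ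
  · have := hf.le_apply_add_smul_gradient hlip hγ hγL x
    rw [add_sub_cancel_left, norm_smul, Real.norm_of_nonneg hγ]
    nlinarith [mul_nonneg (mul_nonneg hγ (norm_nonneg (gradient f x))) (sub_nonneg.2 hκ)]
  · simp

theorem mul_le_mul_nudge_log {g : E → ℝ} {k : E → E → ℝ} (hg : ∀ x, 0 < g x)
    (hk : ∀ y x, 0 < k y x)
    (hklip : ∀ y x x', |Real.log (k y x) - Real.log (k y x')| ≤ κ * ‖x - x'‖)
    (hf : Differentiable ℝ fun x => Real.log (g x))
    (hlip : ∀ p q, ‖gradient (fun x => Real.log (g x)) p - gradient (fun x => Real.log (g x)) q‖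
      ≤ L * ‖p - q‖)
    (hγ : 0 ≤ γ) (hγL : γ * L ≤ 1) (x y : E) :
    g x * k y x ≤
      g (nudge (fun x => Real.log (g x)) κ γ x) * k y (nudge (fun x => Real.log (g x)) κ γ x) := by
  set x' := nudge (fun x => Real.log (g x)) κ γ x
  have hgain := hf.mul_norm_nudge_sub_le (κ := κ) hlip hγ hγL x
  have hloss := (abs_le.1 (hklip y x' x)).1
  rw [← Real.log_le_log_iff (mul_pos (hg _) (hk _ _)) (mul_pos (hg _) (hk _ _)),
    Real.log_mul (hg _).ne' (hk _ _).ne', Real.log_mul (hg _).ne' (hk _ _).ne']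
  linarith

theorem apply_le_apply_nudge_log {g : E → ℝ} (hg : ∀ x, 0 < g x)
    (hf : Differentiable ℝ fun x => Real.log (g x))
    (hlip : ∀ p q, ‖gradient (fun x => Real.log (g x)) p - gradient (fun x => Real.log (g x)) q‖
      ≤ L * ‖p - q‖)
    (hγ : 0 ≤ γ) (hγL : γ * L ≤ 1) (x : E) :
    g x ≤ g (nudge (fun x => Real.log (g x)) κ γ x) :=
  (Real.log_le_log_iff (hg _) (hg _)).1 (hf.le_apply_nudge hlip hγ hγL x)

end Nudge

theorem prod_Icc_mul_prod_Icc_sub_one_le {a a' b b' : ℕ → ℝ} {T : ℕ}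
    (ha : ∀ t ∈ Icc 1 T, 0 ≤ a t) (hb : ∀ t ∈ Icc 1 (T - 1), 0 ≤ b t)
    (hab : ∀ t ∈ Icc 1 (T - 1), a t * b t ≤ a' t * b' t) (ha' : ∀ t ∈ Icc 1 T, a t ≤ a' t) :
    (∏ t ∈ Icc 1 T, a t) * ∏ t ∈ Icc 1 (T - 1), b t ≤
      (∏ t ∈ Icc 1 T, a' t) * ∏ t ∈ Icc 1 (T - 1), b' t := by
  rcases T with _ | k
  · simp
  have hT : k + 1 ∈ Icc 1 (k + 1) := by simp
  have hsub : ∀ t ∈ Icc 1 k, t ∈ Icc 1 (k + 1) := fun t ht => Icc_subset_Icc_right k.le_succ ht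
  simp only [Nat.add_sub_cancel] at hb hab ⊢
  rw [prod_Icc_succ_top (by omega), prod_Icc_succ_top (by omega), mul_right_comm,
    mul_right_comm _ (a' _), ← prod_mul_distrib, ← prod_mul_distrib]
  refine mul_le_mul (prod_le_prod (fun t ht => mul_nonneg (ha t (hsub t ht)) (hb t ht)) hab)
    (ha' _ hT) (ha _ hT) (prod_nonneg fun t ht => ?_)
  exact (mul_nonneg (ha t (hsub t ht)) (hb t ht)).trans (hab t ht)

theorem stmt_10_general (d T : ℕ)
    (g : ℕ → EuclideanSpace ℝ (Fin d) → ℝ)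
    (m : ℕ → EuclideanSpace ℝ (Fin d) → EuclideanSpace ℝ (Fin d) → ℝ)
    (m0 : EuclideanSpace ℝ (Fin d) → ℝ)
    (Lg Lτ γ : ℕ → ℝ)
    (hm0 : ∀ x, 0 ≤ m0 x)
    (hgpos : ∀ t, 1 ≤ t → t ≤ T → ∀ x, 0 < g t x)
    (hmpos : ∀ t x x', 0 < m t x x')
    (hdiff : ∀ t, 1 ≤ t → t ≤ T → Differentiable ℝ fun x => Real.log (g t x))
    (hLip : ∀ t, 1 ≤ t → t ≤ T → ∀ x x',
      ‖gradient (fun y => Real.log (g t y)) x -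
        gradient (fun y => Real.log (g t y)) x'‖ ≤ Lg t * ‖x - x'‖)
    (hmLip : ∀ t, 1 ≤ t → t ≤ T → ∀ x x' x'',
      |Real.log (m (t + 1) x x') - Real.log (m (t + 1) x x'')| ≤ Lτ t * ‖x' - x''‖)
    (hγ : ∀ t, 1 ≤ t → t ≤ T → 0 < γ t ∧ γ t ≤ 1 / Lg t)
    (α : ℕ → EuclideanSpace ℝ (Fin d) → EuclideanSpace ℝ (Fin d))
    (hα : ∀ t x, α t x =
      if 2 * Lτ t ≤ ‖gradient (fun y => Real.log (g t y)) x‖ then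
        x + γ t • gradient (fun y => Real.log (g t y)) x
      else x) :
    (∫⁻ x : Fin (T + 1) → EuclideanSpace ℝ (Fin d),
        ENNReal.ofReal ((∏ t ∈ Icc 1 T, g t (x (t : Fin (T + 1)))) *
          (∏ t ∈ Icc 1 (T - 1), m (t + 1) (x ((t + 1 : ℕ) : Fin (T + 1))) (x (t : Fin (T + 1)))) *
          m 1 (x 1) (x 0) * m0 (x 0)))
      ≤
    ∫⁻ x : Fin (T + 1) → EuclideanSpace ℝ (Fin d),
        ENNReal.ofReal ((∏ t ∈ Icc 1 T, g t (α t (x (t : Fin (T + 1))))) *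
          (∏ t ∈ Icc 1 (T - 1),
            m (t + 1) (x ((t + 1 : ℕ) : Fin (T + 1))) (α t (x (t : Fin (T + 1))))) *
          m 1 (x 1) (x 0) * m0 (x 0)) := by
  have hα_nudge : ∀ t, α t = nudge (fun y => Real.log (g t y)) (Lτ t) (γ t) :=
    fun t => funext (hα t)
  have hγL : ∀ t, 1 ≤ t → t ≤ T → γ t * Lg t ≤ 1 := fun t ht₁ ht₂ => by
    obtain ⟨hγ_pos, hγ_le⟩ := hγ t ht₁ ht₂
    exact (le_div_iff₀ (one_div_pos.1 (hγ_pos.trans_le hγ_le))).1 hγ_le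
  refine lintegral_mono fun x => ENNReal.ofReal_le_ofReal <|
    mul_le_mul_of_nonneg_right (mul_le_mul_of_nonneg_right ?_ (hmpos _ _ _).le) (hm0 _)
  simp only [hα_nudge]
  refine prod_Icc_mul_prod_Icc_sub_one_le (fun t ht => ?_) (fun t _ => (hmpos _ _ _).le)
    (fun t ht => ?_) (fun t ht => ?_) <;> simp only [mem_Icc] at ht
  · exact (hgpos t ht.1 ht.2 _).le
  · have ht₂ : t ≤ T := ht.2.trans (Nat.sub_le T 1)
    exact mul_le_mul_nudge_log (hgpos t ht.1 ht₂) (hmpos (t + 1)) (hmLip t ht.1 ht₂)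
      (hdiff t ht.1 ht₂) (hLip t ht.1 ht₂) (hγ t ht.1 ht₂).1.le (hγL t ht.1 ht₂) _ _
  · exact apply_le_apply_nudge_log (hgpos t ht.1 ht.2) (hdiff t ht.1 ht.2) (hLip t ht.1 ht.2)
      (hγ t ht.1 ht.2).1.le (hγL t ht.1 ht.2) _

/-- The model evidence of the nudged model `M₁` dominates the evidence of the original
model `M₀`, for the nudging operator that takes a gradient step of `log g_t` on the set
where `‖∇ log g_t‖ ≥ 2L_t^τ` and is the identity elsewhere. -/
theorem stmt_10 (d T : ℕ) (hT : 1 ≤ T)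
    (g : ℕ → EuclideanSpace ℝ (Fin d) → ℝ)
    (m : ℕ → EuclideanSpace ℝ (Fin d) → EuclideanSpace ℝ (Fin d) → ℝ)
    (m0 : EuclideanSpace ℝ (Fin d) → ℝ)
    (Lg Lτ γ : ℕ → ℝ)
    (hm0 : ∀ x, 0 ≤ m0 x)
    (hgpos : ∀ t, 1 ≤ t → t ≤ T → ∀ x, 0 < g t x)
    (hmpos : ∀ t x x', 0 < m t x x')
    (hdiff : ∀ t, 1 ≤ t → t ≤ T → Differentiable ℝ fun x => Real.log (g t x))
    (hLip : ∀ t, 1 ≤ t → t ≤ T → ∀ x x',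
      ‖gradient (fun y => Real.log (g t y)) x -
        gradient (fun y => Real.log (g t y)) x'‖ ≤ Lg t * ‖x - x'‖)
    (hmLip : ∀ t, 1 ≤ t → t ≤ T → ∀ x x' x'',
      |Real.log (m (t + 1) x x') - Real.log (m (t + 1) x x'')| ≤ Lτ t * ‖x' - x''‖)
    (hγ : ∀ t, 1 ≤ t → t ≤ T → 0 < γ t ∧ γ t ≤ 1 / Lg t)
    (α : ℕ → EuclideanSpace ℝ (Fin d) → EuclideanSpace ℝ (Fin d))
    (hα : ∀ t x, α t x =
      if 2 * Lτ t ≤ ‖gradient (fun y => Real.log (g t y)) x‖ then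
        x + γ t • gradient (fun y => Real.log (g t y)) x
      else x) :
    (∫⁻ x : Fin (T + 1) → EuclideanSpace ℝ (Fin d),
        ENNReal.ofReal ((∏ t ∈ Icc 1 T, g t (x (t : Fin (T + 1)))) *
          (∏ t ∈ Icc 1 (T - 1), m (t + 1) (x ((t + 1 : ℕ) : Fin (T + 1))) (x (t : Fin (T + 1)))) *
          m 1 (x 1) (x 0) * m0 (x 0)))
      ≤
    ∫⁻ x : Fin (T + 1) → EuclideanSpace ℝ (Fin d),
        ENNReal.ofReal ((∏ t ∈ Icc 1 T, g t (α t (x (t : Fin (T + 1))))) *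
          (∏ t ∈ Icc 1 (T - 1),
            m (t + 1) (x ((t + 1 : ℕ) : Fin (T + 1))) (α t (x (t : Fin (T + 1))))) *
          m 1 (x 1) (x 0) * m0 (x 0)) :=
  stmt_10_general d T g m m0 Lg Lτ γ hm0 hgpos hmpos hdiff hLip hmLip hγ α hα
end
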